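/- For any integer m and nonnegative integer k, the sum over i from 0 to k of C(m-i, i) * C(i-m+k, k-i) equals 1 if k is even and 0 if k is odd. -/

import Mathlib

/-!
Put `S k a m = ∑ i ≤ k, C(m - i, i) C(i - m + a, k - i)`, so that the theorem is about
`S k k m`. Pascal's rule applied to the second factor gives
`S (k+1) (a+1) m = S (k+1) a m + S k a m`, and applied to the first factor
`S (k+1) (a+1) (m+1) = S (k+1) a m + S k a (m-1)`. Hence `S (k+1) (k+1) (m+1) - S (k+1) (k+1) m`
equals `S k k (m-1) - S k k m`, and by induction on `k` the sum `S k k m` does not depend on `m`.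
At `m = k` the term `C(k - i, i) C(i, k - i)` vanishes unless `k - i = i`.
-/

/-- The generalized binomial coefficient `C(a, b) = a(a-1)⋯(a-b+1)/b!`
for an integer `a` and a natural number `b`, valued in `ℚ`. -/
noncomputable def genChoose (a : ℤ) (b : ℕ) : ℚ :=
  (∏ i ∈ Finset.range b, ((a : ℚ) - i)) / (Nat.factorial b : ℚ)

open Finset Ring

lemma genChoose_eq_choose (a : ℤ) (b : ℕ) : genChoose a b = Ring.choose a b := by
  have h := descPochhammer_eq_factorial_smul_choose a b
  rw [← Polynomial.eval_eq_smeval, descPochhammer_eval_eq_prod_range, nsmul_eq_mul] at h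
  rw [genChoose, div_eq_iff (by positivity), mul_comm]
  exact_mod_cast h

section BinomialRing

variable {R : Type*} [CommRing R] [BinomialRing R]

def skewChooseSum (k : ℕ) (a m : R) : R :=
  ∑ i ∈ range (k + 1), choose (m - i) i * choose (i - m + a) (k - i)

lemma skewChooseSum_zero (a m : R) : skewChooseSum 0 a m = 1 := by
  simp [skewChooseSum]

lemma skewChooseSum_succ_add_one (k : ℕ) (a m : R) :
    skewChooseSum (k + 1) (a + 1) m = skewChooseSum (k + 1) a m + skewChooseSum k a m := by
  have pascal : ∀ i ∈ range (k + 1),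
      choose (m - i) i * choose (i - m + (a + 1)) (k + 1 - i) =
        choose (m - i) i * choose (i - m + a) (k + 1 - i) +
          choose (m - i) i * choose (i - m + a) (k - i) := by
    intro i hi
    rw [Nat.sub_add_comm (mem_range_succ_iff.mp hi), ← add_assoc, choose_succ_succ]
    ring
  rw [skewChooseSum, skewChooseSum, skewChooseSum, sum_range_succ _ (k + 1),
    sum_range_succ _ (k + 1), sum_congr rfl pascal, sum_add_distrib]
  simp only [Nat.sub_self, choose_zero_right]
  ring

lemma skewChooseSum_succ_add_one_add_one (k : ℕ) (a m : R) :
    skewChooseSum (k + 1) (a + 1) (m + 1) =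
      skewChooseSum (k + 1) a m + skewChooseSum k a (m - 1) := by
  have pascal : ∀ i ∈ range (k + 1),
      choose (m + 1 - (i + 1 : ℕ)) (i + 1) *
          choose ((i + 1 : ℕ) - (m + 1) + (a + 1)) (k + 1 - (i + 1)) =
        choose (m - (i + 1 : ℕ)) (i + 1) * choose ((i + 1 : ℕ) - m + a) (k + 1 - (i + 1)) +
          choose (m - 1 - i) i * choose (i - (m - 1) + a) (k - i) := by
    intro i _
    have h₁ : m + 1 - (i + 1 : ℕ) = m - (i + 1 : ℕ) + 1 := by push_cast; ring
    have h₂ : ((i + 1 : ℕ) : R) - (m + 1) + (a + 1) = (i + 1 : ℕ) - m + a := by push_cast; ring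
    have h₃ : m - (i + 1 : ℕ) = m - 1 - i := by push_cast; ring
    have h₄ : ((i + 1 : ℕ) : R) - m + a = i - (m - 1) + a := by push_cast; ring
    rw [h₁, h₂, choose_succ_succ, Nat.add_sub_add_right, add_mul, add_comm, h₃, h₄]
  have boundary : choose (m + 1 - (0 : ℕ)) 0 * choose ((0 : ℕ) - (m + 1) + (a + 1)) (k + 1 - 0) =
      choose (m - (0 : ℕ)) 0 * choose ((0 : ℕ) - m + a) (k + 1 - 0) := by
    simp only [choose_zero_right, Nat.cast_zero]
    ring_nf
  rw [skewChooseSum, skewChooseSum, skewChooseSum, sum_range_succ' _ (k + 1),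
    sum_range_succ' _ (k + 1), sum_congr rfl pascal, sum_add_distrib, boundary]
  ring

end BinomialRing

lemma skewChooseSum_self_add_one (k : ℕ) (m : ℤ) :
    skewChooseSum k (k : ℤ) (m + 1) = skewChooseSum k (k : ℤ) m := by
  induction k generalizing m with
  | zero => simp only [skewChooseSum_zero]
  | succ k ih =>
    rw [Nat.cast_succ, skewChooseSum_succ_add_one_add_one, skewChooseSum_succ_add_one,
      ← ih (m - 1), sub_add_cancel]

lemma skewChooseSum_self_eq_self_self (k : ℕ) (m : ℤ) :
    skewChooseSum k (k : ℤ) m = skewChooseSum k (k : ℤ) k := by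
  have periodic : Function.Periodic (skewChooseSum k (k : ℤ)) 1 :=
    skewChooseSum_self_add_one k
  simpa using (periodic.int_mul_eq m).trans (periodic.int_mul_eq k).symm

lemma Nat.choose_mul_choose_swap (a b : ℕ) : a.choose b * b.choose a = if a = b then 1 else 0 := by
  rcases lt_trichotomy a b with h | rfl | h
  · simp [Nat.choose_eq_zero_of_lt h, h.ne]
  · simp
  · simp [Nat.choose_eq_zero_of_lt h, h.ne']

lemma sum_range_ite_sub_eq_self (k : ℕ) :
    ∑ i ∈ range (k + 1), (if k - i = i then 1 else 0 : ℤ) = if Even k then 1 else 0 := by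
  rcases Nat.even_or_odd' k with ⟨j, rfl | rfl⟩
  · have : ∀ i, 2 * j - i = i ↔ j = i := by omega
    simp [this, show j ≤ 2 * j by omega]
  · have : ∀ i, 2 * j + 1 - i ≠ i := by omega
    simp [this]

lemma skewChooseSum_self_self (k : ℕ) :
    skewChooseSum k (k : ℤ) k = if Even k then 1 else 0 := by
  rw [skewChooseSum, ← sum_range_ite_sub_eq_self]
  refine sum_congr rfl fun i hi => ?_
  rw [← Nat.cast_sub (mem_range_succ_iff.mp hi), sub_add_cancel, choose_natCast, choose_natCast,
    ← Nat.cast_mul, Nat.choose_mul_choose_swap]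
  push_cast
  rfl

theorem stmt1 (m : ℤ) (k : ℕ) :
    ∑ i ∈ Finset.range (k + 1),
        genChoose (m - i) i * genChoose ((i : ℤ) - m + k) (k - i) =
      if Even k then 1 else 0 := by
  have key := (skewChooseSum_self_eq_self_self k m).trans (skewChooseSum_self_self k)
  rw [skewChooseSum] at key
  simp only [genChoose_eq_choose]
  exact_mod_cast key
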